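/- For any integer d ≡ 3 (mod 8), the coefficient a(d) = (n_d − m_d)/2 is zero, where n_d = #{(x,y,z) ∈ ℤ³ : d = x² + 14y² + 14z²} and m_d = #{(x,y,z) ∈ ℤ³ : d = 2x² + 7y² + 14z²}. -/
import Mathlib

lemma aux_n : ∀ a b c : ZMod 16, a ^ 2 + 14 * b ^ 2 + 14 * c ^ 2 ≠ 3 ∧
    a ^ 2 + 14 * b ^ 2 + 14 * c ^ 2 ≠ 11 := by decide

lemma aux_m : ∀ a b c : ZMod 16, 2 * a ^ 2 + 7 * b ^ 2 + 14 * c ^ 2 ≠ 3 ∧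
    2 * a ^ 2 + 7 * b ^ 2 + 14 * c ^ 2 ≠ 11 := by decide

lemma d_cast (d : ℤ) (hd : d % 8 = 3) : (d : ZMod 16) = 3 ∨ (d : ZMod 16) = 11 := by
  have h16 : d % 16 = 3 ∨ d % 16 = 11 := by omega
  have key : ((d % 16 : ℤ) : ZMod 16) = (d : ZMod 16) := ZMod.intCast_mod d 16
  rcases h16 with h | h <;> [left; right] <;> rw [← key, h] <;> norm_num

theorem stmt_4 (d : ℤ) (hd : d % 8 = 3)
    (n_d m_d : ℕ)
    (hn : n_d = Nat.card {t : ℤ × ℤ × ℤ // d = t.1 ^ 2 + 14 * t.2.1 ^ 2 + 14 * t.2.2 ^ 2})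
    (hm : m_d = Nat.card {t : ℤ × ℤ × ℤ // d = 2 * t.1 ^ 2 + 7 * t.2.1 ^ 2 + 14 * t.2.2 ^ 2}) :
    ((n_d : ℚ) - (m_d : ℚ)) / 2 = 0 := by
  have hdc := d_cast d hd
  have hn0 : n_d = 0 := by
    rw [hn, Nat.card_eq_zero]
    left
    constructor
    rintro ⟨⟨x, y, z⟩, h⟩
    have h' : (d : ZMod 16) = (x : ZMod 16) ^ 2 + 14 * y ^ 2 + 14 * z ^ 2 := by
      exact_mod_cast congrArg (Int.cast : ℤ → ZMod 16) h
    rcases hdc with hc | hc <;> rw [hc] at h'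
    · exact (aux_n x y z).1 h'.symm
    · exact (aux_n x y z).2 h'.symm
  have hm0 : m_d = 0 := by
    rw [hm, Nat.card_eq_zero]
    left
    constructor
    rintro ⟨⟨x, y, z⟩, h⟩
    have h' : (d : ZMod 16) = 2 * (x : ZMod 16) ^ 2 + 7 * y ^ 2 + 14 * z ^ 2 := by
      exact_mod_cast congrArg (Int.cast : ℤ → ZMod 16) h
    rcases hdc with hc | hc <;> rw [hc] at h'
    · exact (aux_m x y z).1 h'.symm
    · exact (aux_m x y z).2 h'.symm
  rw [hn0, hm0]
  norm_num
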